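/- arXiv:2302.00132 — 3 statements merged into one kernel-verified Lean document; each statement's English description precedes it below -/
import Mathlib

section
/- Let Ω_r^+ = {(x', xₙ) : |x'| < r, ψ(x') < xₙ < ψ(x') + (M+1)r} be a special Lipschitz domain over a Lipschitz function ψ with constant ≤ M and ψ(0)=0, let Ψ(x',xₙ) = (x', 2ψ(x') − xₙ), and let Ω_r be the union of Ω_r^+ with its reflection Ω_r^− = Ψ(Ω_r^+) and the graph piece between them. For u ∈ L¹(Ω_r^+), define ũ = u on Ω_r^+ and ũ = u ∘ Ψ on Ω_r^−. Then for r' < r/(3(M+1)), the average of |ũ| over B_{r'}(0) is bounded by C times the average of |u| over B_{3(M+1)r'}(0) ∩ Ω_r^+, where C depends only on n and M. -/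
open MeasureTheory Real NNReal

/-- The first `m` coordinates of a point of `ℝ^{m+1}`. -/
noncomputable def initPart (m : ℕ) (x : EuclideanSpace ℝ (Fin (m + 1))) :
    EuclideanSpace ℝ (Fin m) :=
  WithLp.toLp 2 (fun i : Fin m => x i.castSucc)

/-- Reflection across the graph of `ψ`: `Ψ(x', xₙ) = (x', 2ψ(x') − xₙ)`. -/
noncomputable def reflMap (m : ℕ) (ψ : EuclideanSpace ℝ (Fin m) → ℝ) :
    EuclideanSpace ℝ (Fin (m + 1)) → EuclideanSpace ℝ (Fin (m + 1)) :=
  fun x => WithLp.toLp 2 (Fin.snoc (initPart m x).ofLp (2 * ψ (initPart m x) - x (Fin.last m)) :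
    Fin (m + 1) → ℝ)

/-- The special Lipschitz domain
`Ω_r^+ = {(x', xₙ) : |x'| < r, ψ(x') < xₙ < ψ(x') + (M+1) r}`. -/
def specialDomain (m : ℕ) (M : ℝ) (ψ : EuclideanSpace ℝ (Fin m) → ℝ) (r : ℝ) :
    Set (EuclideanSpace ℝ (Fin (m + 1))) :=
  {x | ‖initPart m x‖ < r ∧ ψ (initPart m x) < x (Fin.last m) ∧
    x (Fin.last m) < ψ (initPart m x) + (M + 1) * r}

/-- The even reflection `ũ` of `u` across the graph of `ψ`:
`ũ = u` above the graph, `ũ = u ∘ Ψ` below it. -/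
noncomputable def reflExt (m : ℕ) (ψ : EuclideanSpace ℝ (Fin m) → ℝ)
    (u : EuclideanSpace ℝ (Fin (m + 1)) → ℝ) :
    EuclideanSpace ℝ (Fin (m + 1)) → ℝ :=
  fun x => if ψ (initPart m x) ≤ x (Fin.last m) then u x else u (reflMap m ψ x)

/-!
Below the graph of `ψ` the reflection `ũ` is `u ∘ Ψ`, and `Ψ` is a measure-preserving involution:
in the coordinates `(x', xₙ)` it is the fibrewise reflection `xₙ ↦ 2ψ(x') − xₙ`, and the graph
itself is a null set. Since `|ψ(x')| ≤ M|x'|`, a point of `B_{r'}(0)` above the graph, and the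
reflection of a point below it, both lie in `T = B_{3(M+1)r'}(0) ∩ Ω_r^+`. Hence
`∫_{B_{r'}} |ũ| ≤ 2 ∫_T |u|`, and as `|T| ≤ (3(M+1))ⁿ |B_{r'}|` the averages compare with
`C = 2 (3(M+1))ⁿ`.
-/

section Graph

variable {α : Type*} [MeasurableSpace α] {μ : Measure α} {c : α → ℝ}

lemma measurePreserving_prod_sub_left [SFinite μ] (hc : Measurable c) :
    MeasurePreserving (fun p : α × ℝ => (p.1, c p.1 - p.2)) (μ.prod volume) (μ.prod volume) :=
  (MeasurePreserving.id μ).skew_product (by fun_prop)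
    (ae_of_all _ fun a => (Measure.measurePreserving_sub_left volume (c a)).map_eq)

lemma measure_prod_graph_eq_zero (hc : Measurable c) :
    μ.prod volume {p : α × ℝ | p.2 = c p.1} = 0 := by
  rw [Measure.prod_apply (measurableSet_graph hc)]
  simp

end Graph

theorem MeasureTheory.Measure.addHaar_real_ball_mul {E : Type*} [NormedAddCommGroup E]
    [NormedSpace ℝ E] [MeasurableSpace E] [BorelSpace E] [FiniteDimensional ℝ E] [Nontrivial E]
    (μ : Measure E) [μ.IsAddHaarMeasure] (x : E) {k : ℝ} (hk : 0 ≤ k) (r : ℝ) :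
    μ.real (Metric.ball x (k * r)) = k ^ Module.finrank ℝ E * μ.real (Metric.ball 0 r) := by
  simp [measureReal_def, Measure.addHaar_ball_mul μ x hk, ENNReal.toReal_mul, hk]

lemma setAverage_le_mul_setAverage_of_setIntegral_le {α : Type*} [MeasurableSpace α]
    {μ : Measure α} {s t : Set α} {f g : α → ℝ} {c K : ℝ} (hs₀ : μ s ≠ 0) (hs : μ s ≠ ⊤)
    (ht : μ t ≠ ⊤) (hts : μ.real t ≤ K * μ.real s) (hc : 0 ≤ c) (hg : ∀ x, 0 ≤ g x)
    (h : ∫ x in s, f x ∂μ ≤ c * ∫ x in t, g x ∂μ) :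
    ⨍ x in s, f x ∂μ ≤ c * K * ⨍ x in t, g x ∂μ := by
  rw [setAverage_eq, setAverage_eq, smul_eq_mul, smul_eq_mul]
  have hs_pos : 0 < μ.real s := ENNReal.toReal_pos hs₀ hs
  rcases measureReal_nonneg.eq_or_lt with ht₀ | ht_pos
  · rw [Measure.restrict_eq_zero.2 ((measureReal_eq_zero_iff ht).1 ht₀.symm),
      integral_zero_measure, mul_zero] at h ⊢
    simpa using mul_nonpos_of_nonneg_of_nonpos (inv_nonneg.2 hs_pos.le) h
  have hinv : (μ.real s)⁻¹ ≤ K * (μ.real t)⁻¹ := by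
    rwa [← div_eq_mul_inv, le_div_iff₀ ht_pos, inv_mul_le_iff₀ hs_pos, mul_comm]
  have hcg : 0 ≤ c * ∫ x in t, g x ∂μ := mul_nonneg hc (integral_nonneg hg)
  calc (μ.real s)⁻¹ * ∫ x in s, f x ∂μ ≤ (μ.real s)⁻¹ * (c * ∫ x in t, g x ∂μ) :=
        mul_le_mul_of_nonneg_left h (inv_nonneg.2 hs_pos.le)
    _ ≤ K * (μ.real t)⁻¹ * (c * ∫ x in t, g x ∂μ) := mul_le_mul_of_nonneg_right hinv hcg
    _ = c * K * ((μ.real t)⁻¹ * ∫ x in t, g x ∂μ) := by ring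

namespace SpecialLipschitz

variable {m : ℕ} {ψ : EuclideanSpace ℝ (Fin m) → ℝ}

@[simp]
lemma initPart_apply (x : EuclideanSpace ℝ (Fin (m + 1))) (i : Fin m) :
    initPart m x i = x i.castSucc := rfl

@[simp]
lemma initPart_reflMap (ψ : EuclideanSpace ℝ (Fin m) → ℝ) (x : EuclideanSpace ℝ (Fin (m + 1))) :
    initPart m (reflMap m ψ x) = initPart m x := by
  ext i
  simp [reflMap]

@[simp]
lemma reflMap_apply_last (ψ : EuclideanSpace ℝ (Fin m) → ℝ) (x : EuclideanSpace ℝ (Fin (m + 1))) :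
    reflMap m ψ x (Fin.last m) = 2 * ψ (initPart m x) - x (Fin.last m) := by
  simp [reflMap]

@[fun_prop]
lemma continuous_initPart : Continuous (initPart m) := by
  unfold initPart
  fun_prop

lemma norm_sq_eq_norm_initPart_sq_add (x : EuclideanSpace ℝ (Fin (m + 1))) :
    ‖x‖ ^ 2 = ‖initPart m x‖ ^ 2 + x (Fin.last m) ^ 2 := by
  simp [EuclideanSpace.norm_sq_eq, Fin.sum_univ_castSucc]

lemma norm_initPart_le (x : EuclideanSpace ℝ (Fin (m + 1))) : ‖initPart m x‖ ≤ ‖x‖ :=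
  le_of_sq_le_sq (by nlinarith [norm_sq_eq_norm_initPart_sq_add x]) (norm_nonneg x)

lemma abs_apply_last_le (x : EuclideanSpace ℝ (Fin (m + 1))) : |x (Fin.last m)| ≤ ‖x‖ :=
  abs_le_of_sq_le_sq (by nlinarith [norm_sq_eq_norm_initPart_sq_add x]) (norm_nonneg x)

lemma norm_reflMap_le (ψ : EuclideanSpace ℝ (Fin m) → ℝ) (x : EuclideanSpace ℝ (Fin (m + 1))) :
    ‖reflMap m ψ x‖ ≤ ‖initPart m x‖ + |2 * ψ (initPart m x) - x (Fin.last m)| := by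
  refine le_of_sq_le_sq ?_ (by positivity)
  rw [norm_sq_eq_norm_initPart_sq_add, initPart_reflMap, reflMap_apply_last, add_sq, sq_abs]
  nlinarith [norm_nonneg (initPart m x), abs_nonneg (2 * ψ (initPart m x) - x (Fin.last m))]

noncomputable def splitLast (m : ℕ) :
    EuclideanSpace ℝ (Fin (m + 1)) ≃ᵐ EuclideanSpace ℝ (Fin m) × ℝ :=
  (MeasurableEquiv.toLp 2 (Fin (m + 1) → ℝ)).symm.trans <|
    (MeasurableEquiv.piFinSuccAbove (fun _ => ℝ) (Fin.last m)).trans <|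
      MeasurableEquiv.prodComm.trans <|
        (MeasurableEquiv.toLp 2 (Fin m → ℝ)).prodCongr (MeasurableEquiv.refl ℝ)

@[simp]
lemma splitLast_apply (x : EuclideanSpace ℝ (Fin (m + 1))) :
    splitLast m x = (initPart m x, x (Fin.last m)) := by
  refine Prod.ext ?_ rfl
  ext i
  change x ((Fin.last m).succAbove i) = x i.castSucc
  rw [Fin.succAbove_last]

lemma measurePreserving_splitLast : MeasurePreserving (splitLast m) volume volume :=
  (((PiLp.volume_preserving_toLp (Fin m)).prod (MeasurePreserving.id volume)).comp
    Measure.measurePreserving_swap).comp <|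
      (volume_preserving_piFinSuccAbove (fun _ => ℝ) (Fin.last m)).comp
        (EuclideanSpace.volume_preserving_symm_measurableEquiv_toLp (Fin (m + 1)))

lemma reflMap_eq_conj (ψ : EuclideanSpace ℝ (Fin m) → ℝ) :
    reflMap m ψ = (splitLast m).symm ∘ (fun p => (p.1, 2 * ψ p.1 - p.2)) ∘ splitLast m := by
  funext x
  simp [(splitLast m).eq_symm_apply]

lemma reflMap_involutive (ψ : EuclideanSpace ℝ (Fin m) → ℝ) : Function.Involutive (reflMap m ψ) :=
  fun x => (splitLast m).injective (by simp)

lemma measurePreserving_reflMap (hψ : Measurable ψ) :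
    MeasurePreserving (reflMap m ψ) volume volume := by
  rw [reflMap_eq_conj]
  exact measurePreserving_splitLast.symm _ |>.comp <|
    (measurePreserving_prod_sub_left (c := fun y => 2 * ψ y) (by fun_prop)).comp
      measurePreserving_splitLast

lemma measurableEmbedding_reflMap (hψ : Measurable ψ) : MeasurableEmbedding (reflMap m ψ) :=
  (MeasurableEquiv.ofInvolutive _ (reflMap_involutive ψ)
    (measurePreserving_reflMap hψ).measurable).measurableEmbedding

lemma volume_graph_eq_zero (hψ : Measurable ψ) :
    volume {x : EuclideanSpace ℝ (Fin (m + 1)) | x (Fin.last m) = ψ (initPart m x)} = 0 := by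
  have h := measurePreserving_splitLast.measure_preimage (measurableSet_graph hψ).nullMeasurableSet
  rw [Measure.volume_eq_prod, measure_prod_graph_eq_zero hψ] at h
  simpa using h

lemma reflExt_of_le (u : EuclideanSpace ℝ (Fin (m + 1)) → ℝ) {x : EuclideanSpace ℝ (Fin (m + 1))}
    (h : ψ (initPart m x) ≤ x (Fin.last m)) : reflExt m ψ u x = u x :=
  if_pos h

lemma reflExt_of_lt (u : EuclideanSpace ℝ (Fin (m + 1)) → ℝ) {x : EuclideanSpace ℝ (Fin (m + 1))}
    (h : x (Fin.last m) < ψ (initPart m x)) : reflExt m ψ u x = u (reflMap m ψ x) :=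
  if_neg h.not_ge

lemma lintegral_enorm_reflExt_le (hψ : Measurable ψ) {B T : Set (EuclideanSpace ℝ (Fin (m + 1)))}
    (h_above : ∀ x ∈ B, ψ (initPart m x) < x (Fin.last m) → x ∈ T)
    (h_below : ∀ x ∈ B, x (Fin.last m) < ψ (initPart m x) → reflMap m ψ x ∈ T)
    (u : EuclideanSpace ℝ (Fin (m + 1)) → ℝ) :
    ∫⁻ x in B, ‖reflExt m ψ u x‖ₑ ≤ 2 * ∫⁻ x in T, ‖u x‖ₑ := by
  set A := {x : EuclideanSpace ℝ (Fin (m + 1)) | ψ (initPart m x) ≤ x (Fin.last m)}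
  have hA : MeasurableSet A := measurableSet_le (by fun_prop) (by fun_prop)
  rw [← lintegral_add_compl _ hA, two_mul]
  gcongr ?_ + ?_
  · calc ∫⁻ x in A, ‖reflExt m ψ u x‖ₑ ∂volume.restrict B
        = ∫⁻ x in A ∩ B, ‖u x‖ₑ := by
          rw [setLIntegral_congr_fun hA fun x hx => congrArg _ (reflExt_of_le u hx),
            Measure.restrict_restrict hA]
      _ ≤ ∫⁻ x in T, ‖u x‖ₑ := by
          refine lintegral_mono_set' ?_
          filter_upwards [measure_eq_zero_iff_ae_notMem.1 (volume_graph_eq_zero hψ)]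
            with x hx ⟨hxA, hxB⟩
          exact h_above x hxB (lt_of_le_of_ne hxA fun h => hx h.symm)
  · calc ∫⁻ x in Aᶜ, ‖reflExt m ψ u x‖ₑ ∂volume.restrict B
        = ∫⁻ x in Aᶜ ∩ B, ‖u (reflMap m ψ x)‖ₑ := by
          rw [setLIntegral_congr_fun hA.compl
              fun x hx => congrArg _ (reflExt_of_lt u (not_le.1 hx)),
            Measure.restrict_restrict hA.compl]
      _ ≤ ∫⁻ x in reflMap m ψ ⁻¹' T, ‖u (reflMap m ψ x)‖ₑ :=
          lintegral_mono_set fun x ⟨hxA, hxB⟩ => h_below x hxB (not_le.1 hxA)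
      _ = ∫⁻ x in T, ‖u x‖ₑ :=
          (measurePreserving_reflMap hψ).setLIntegral_comp_preimage_emb
            (measurableEmbedding_reflMap hψ) (fun y => ‖u y‖ₑ) T

lemma setIntegral_abs_reflExt_le (hψ : Measurable ψ) {B T : Set (EuclideanSpace ℝ (Fin (m + 1)))}
    (h_above : ∀ x ∈ B, ψ (initPart m x) < x (Fin.last m) → x ∈ T)
    (h_below : ∀ x ∈ B, x (Fin.last m) < ψ (initPart m x) → reflMap m ψ x ∈ T)
    {u : EuclideanSpace ℝ (Fin (m + 1)) → ℝ} (hu : IntegrableOn u T) :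
    ∫ x in B, |reflExt m ψ u x| ≤ 2 * ∫ x in T, |u x| := by
  have hfin : 2 * ∫⁻ x in T, ‖u x‖ₑ ≠ ⊤ := ENNReal.mul_ne_top (by simp) hu.2.ne
  calc ∫ x in B, |reflExt m ψ u x|
      ≤ (∫⁻ x in B, ‖reflExt m ψ u x‖ₑ).toReal := by
        refine (le_abs_self _).trans ?_
        simpa [Real.enorm_eq_ofReal_abs] using norm_integral_le_lintegral_norm
          (μ := volume.restrict B) (fun x => |reflExt m ψ u x|)
    _ ≤ (2 * ∫⁻ x in T, ‖u x‖ₑ).toReal :=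
        ENNReal.toReal_mono hfin (lintegral_enorm_reflExt_le hψ h_above h_below u)
    _ = 2 * ∫ x in T, |u x| := by
        rw [ENNReal.toReal_mul, ← integral_norm_eq_lintegral_enorm hu.1]
        simp

lemma mem_ball_inter_specialDomain_of_above {M r r' : ℝ} (hM : 0 ≤ M)
    (hψ : ∀ y, |ψ y| ≤ M * ‖y‖) (hr : r' ≤ r) {x : EuclideanSpace ℝ (Fin (m + 1))}
    (hx : ‖x‖ < r') (h : ψ (initPart m x) < x (Fin.last m)) :
    x ∈ Metric.ball 0 (3 * (M + 1) * r') ∩ specialDomain m M ψ r := by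
  have hx' := (norm_initPart_le x).trans_lt hx
  have hxn := abs_lt.1 <| (abs_apply_last_le x).trans_lt hx
  have hψx := abs_le.1 <| (hψ (initPart m x)).trans (mul_le_mul_of_nonneg_left hx'.le hM)
  have hMr : M * r' ≤ M * r := mul_le_mul_of_nonneg_left hr hM
  refine ⟨?_, by linarith, h, by linarith⟩
  rw [mem_ball_zero_iff]
  nlinarith [norm_nonneg x]

lemma reflMap_mem_ball_inter_specialDomain_of_below {M r r' : ℝ} (hM : 0 ≤ M)
    (hψ : ∀ y, |ψ y| ≤ M * ‖y‖) (hr : r' ≤ r) {x : EuclideanSpace ℝ (Fin (m + 1))}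
    (hx : ‖x‖ < r') (h : x (Fin.last m) < ψ (initPart m x)) :
    reflMap m ψ x ∈ Metric.ball 0 (3 * (M + 1) * r') ∩ specialDomain m M ψ r := by
  have hx' := (norm_initPart_le x).trans_lt hx
  have hxn := abs_lt.1 <| (abs_apply_last_le x).trans_lt hx
  have hψx := abs_le.1 <| (hψ (initPart m x)).trans (mul_le_mul_of_nonneg_left hx'.le hM)
  have hMr : M * r' ≤ M * r := mul_le_mul_of_nonneg_left hr hM
  have hMr' : 0 ≤ M * r' := mul_nonneg hM ((norm_nonneg x).trans hx.le)
  refine ⟨?_, ?_, ?_, ?_⟩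
  · rw [mem_ball_zero_iff]
    refine (norm_reflMap_le ψ x).trans_lt ?_
    have : |2 * ψ (initPart m x) - x (Fin.last m)| ≤ 2 * (M * r') + r' :=
      abs_le.2 ⟨by linarith, by linarith⟩
    linarith
  all_goals simp only [initPart_reflMap, reflMap_apply_last]; linarith

end SpecialLipschitz

open SpecialLipschitz

theorem stmt3 (m : ℕ) (M : ℝ) (hM : 0 ≤ M) :
    ∃ C : ℝ, 0 < C ∧
      ∀ (ψ : EuclideanSpace ℝ (Fin m) → ℝ), ψ 0 = 0 →
        LipschitzWith (Real.toNNReal M) ψ →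
      ∀ (r : ℝ), 0 < r →
      ∀ (u : EuclideanSpace ℝ (Fin (m + 1)) → ℝ),
        IntegrableOn u (specialDomain m M ψ r) →
      ∀ (r' : ℝ), 0 < r' → r' < r / (3 * (M + 1)) →
        ⨍ x in Metric.ball (0 : EuclideanSpace ℝ (Fin (m + 1))) r',
            |reflExt m ψ u x|
          ≤ C * ⨍ x in Metric.ball (0 : EuclideanSpace ℝ (Fin (m + 1)))
              (3 * (M + 1) * r') ∩ specialDomain m M ψ r, |u x| := by
  have hM₃ : 0 < 3 * (M + 1) := by linarith
  refine ⟨2 * (3 * (M + 1)) ^ (m + 1), mul_pos two_pos (pow_pos hM₃ _), ?_⟩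
  intro ψ hψ₀ hψL r hr u hu r' hr' hr'_lt
  have hψ : ∀ y, |ψ y| ≤ M * ‖y‖ := fun y => by
    simpa [Real.coe_toNNReal M hM] using hψL.norm_le_mul hψ₀ y
  have hr'r : r' ≤ r := hr'_lt.le.trans (div_le_self hr.le (by linarith))
  have hint := setIntegral_abs_reflExt_le hψL.continuous.measurable
    (fun x hx h => mem_ball_inter_specialDomain_of_above hM hψ hr'r (mem_ball_zero_iff.1 hx) h)
    (fun x hx h =>
      reflMap_mem_ball_inter_specialDomain_of_below hM hψ hr'r (mem_ball_zero_iff.1 hx) h)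
    (hu.mono_set Set.inter_subset_right)
  have hvol : volume.real (Metric.ball 0 (3 * (M + 1) * r') ∩ specialDomain m M ψ r) ≤
      (3 * (M + 1)) ^ (m + 1) *
        volume.real (Metric.ball (0 : EuclideanSpace ℝ (Fin (m + 1))) r') := by
    refine (measureReal_mono Set.inter_subset_left).trans_eq ?_
    rw [Measure.addHaar_real_ball_mul volume 0 hM₃.le, finrank_euclideanSpace_fin]
  exact setAverage_le_mul_setAverage_of_setIntegral_le
    (Metric.measure_ball_pos volume 0 hr').ne' measure_ball_lt_top.ne
    (measure_ne_top_of_subset Set.inter_subset_left measure_ball_lt_top.ne) hvol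
    zero_le_two (fun _ => abs_nonneg _) hint
end

section
/- Define f : [0,2] → ℝ by f(x) = (2−x) e^{x−1} ( −e^{x+1}/(x+2) + ∫_{−1}^{1} e^{t² − x t} dt ). Then f is continuous on [0,2], f(0) > 1, and f(2) = 0; consequently there exists δ ∈ (0,2) with f(δ) = 1. -/
open MeasureTheory Real

lemma integral_one_add_sq_add_pow_four_div_two :
    ∫ t in (-1 : ℝ)..1, (1 + t ^ 2 + (t ^ 2) ^ 2 / 2) = 43 / 15 := by
  simp_rw [← pow_mul]
  rw [intervalIntegral.integral_add, intervalIntegral.integral_add, intervalIntegral.integral_div]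
  all_goals norm_num [integral_pow]

lemma exp_one_lt_integral_exp_sq : exp 1 < ∫ t in (-1 : ℝ)..1, exp (t ^ 2) :=
  calc exp 1 < 43 / 15 := by linarith [exp_one_lt_d9]
    _ = ∫ t in (-1 : ℝ)..1, (1 + t ^ 2 + (t ^ 2) ^ 2 / 2) :=
      integral_one_add_sq_add_pow_four_div_two.symm
    _ ≤ ∫ t in (-1 : ℝ)..1, exp (t ^ 2) :=
      intervalIntegral.integral_mono_on (by norm_num)
        (Continuous.intervalIntegrable (by fun_prop) _ _)
        (Continuous.intervalIntegrable (by fun_prop) _ _)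
        fun t _ => quadratic_le_exp_of_nonneg (sq_nonneg t)

theorem stmt8 :
    ∀ f : ℝ → ℝ,
      f = (fun x => (2 - x) * Real.exp (x - 1) *
        (-Real.exp (x + 1) / (x + 2) + ∫ t in (-1 : ℝ)..1, Real.exp (t ^ 2 - x * t))) →
      ContinuousOn f (Set.Icc 0 2) ∧ 1 < f 0 ∧ f 2 = 0 ∧
        ∃ δ ∈ Set.Ioo (0 : ℝ) 2, f δ = 1 := by
  rintro f rfl
  have hI : Continuous fun x : ℝ => ∫ t in (-1 : ℝ)..1, exp (t ^ 2 - x * t) :=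
    intervalIntegral.continuous_parametric_intervalIntegral_of_continuous' (by fun_prop) _ _
  have hcont : ContinuousOn (fun x => (2 - x) * exp (x - 1) *
      (-exp (x + 1) / (x + 2) + ∫ t in (-1 : ℝ)..1, exp (t ^ 2 - x * t))) (Set.Icc 0 2) := by
    refine ContinuousOn.mul (by fun_prop) (ContinuousOn.add ?_ hI.continuousOn)
    fun_prop (disch := intro x hx; linarith [hx.1])
  have hf0 : 1 < (2 - 0) * exp (0 - 1) *
      (-exp (0 + 1) / (0 + 2) + ∫ t in (-1 : ℝ)..1, exp (t ^ 2 - 0 * t)) := by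
    -- the left-hand side is `2 (∫ e^{t²}) / e - 1`
    have he := exp_one_lt_integral_exp_sq
    simp only [zero_mul, sub_zero, zero_add, zero_sub, exp_neg]
    field_simp
    linarith
  have hf2 : (2 - 2) * exp (2 - 1) *
      (-exp (2 + 1) / (2 + 2) + ∫ t in (-1 : ℝ)..1, exp (t ^ 2 - 2 * t)) = 0 := by
    simp
  obtain ⟨δ, hδ, hδ1⟩ :=
    intermediate_value_Ioo' zero_le_two hcont (by simp only [hf2]; exact ⟨one_pos, hf0⟩)
  exact ⟨hcont, hf0, hf2, δ, hδ, hδ1⟩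
end

section
/- Let n ≥ 3 and let Ω = {x = (x', xₙ) ∈ ℝⁿ : |x'|² + xₙ² < e^{−2}, xₙ > |x'|}. Define u(x) = −ln(xₙ) and b(x) = −eₙ/(xₙ ln xₙ). Then ∇u(x) + b(x) u(x) = 0 for all x ∈ Ω, u ∈ W^{1,2}(Ω), and b ∈ Lⁿ(Ω;ℝⁿ). In particular u is a weak solution of −Δu − div(bu) = 0 in Ω with vanishing conormal data (∇u + bu)·ν = 0 on ∂Ω, yet u is unbounded near 0 ∈ ∂Ω. -/
open MeasureTheory Real

/-- The cone-like Lipschitz domain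
`Ω = {(x', xₙ) : |x'|² + xₙ² < e^{-2}, xₙ > |x'|}`. -/
noncomputable def domain11 (m : ℕ) : Set (EuclideanSpace ℝ (Fin (m + 1))) :=
  {x | ‖x‖ < Real.exp (-1) ∧ ‖initPart m x‖ < x (Fin.last m)}

/-- `u(x) = − ln xₙ`. -/
noncomputable def u11 (m : ℕ) (x : EuclideanSpace ℝ (Fin (m + 1))) : ℝ :=
  -Real.log (x (Fin.last m))

/-- `b(x) = − eₙ / (xₙ ln xₙ)`. -/
noncomputable def b11 (m : ℕ) (x : EuclideanSpace ℝ (Fin (m + 1))) :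
    EuclideanSpace ℝ (Fin (m + 1)) :=
  (-(x (Fin.last m) * Real.log (x (Fin.last m)))⁻¹) •
    EuclideanSpace.single (Fin.last m) (1 : ℝ)

section Aux

open Set Filter
open scoped ENNReal NNReal Topology

lemma lintegral_radial {E : Type*} [NormedAddCommGroup E] [NormedSpace ℝ E]
    [MeasurableSpace E] [BorelSpace E] [FiniteDimensional ℝ E] [Nontrivial E]
    (μ : Measure E) [μ.IsAddHaarMeasure] {g : ℝ → ℝ≥0∞} (hg : Measurable g) :
    ∫⁻ x, g ‖x‖ ∂μ = μ.toSphere Set.univ *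
      ∫⁻ r in Ioi (0:ℝ), ENNReal.ofReal (r ^ (Module.finrank ℝ E - 1)) * g r := by
  have h0 : ∫⁻ x, g ‖x‖ ∂μ = ∫⁻ x : ({(0:E)}ᶜ : Set E), g ‖x.1‖ ∂(μ.comap Subtype.val) := by
    rw [lintegral_subtype_comap (measurableSet_singleton (0:E)).compl (fun a => g ‖a‖)]
    simp
  rw [h0]
  have hmeas : Measurable fun p : Metric.sphere (0:E) 1 × Ioi (0:ℝ) => g p.2 :=
    hg.comp (measurable_subtype_coe.comp measurable_snd)
  have h1 := (μ.measurePreserving_homeomorphUnitSphereProd).lintegral_comp hmeas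
  have h1' : ∫⁻ x : ({(0:E)}ᶜ : Set E), g ‖x.1‖ ∂(μ.comap Subtype.val)
      = ∫⁻ p : Metric.sphere (0:E) 1 × Ioi (0:ℝ), g p.2
          ∂(μ.toSphere.prod (.volumeIoiPow (Module.finrank ℝ E - 1))) := by
    rw [← h1]
    exact lintegral_congr fun x => by simp
  rw [h1', lintegral_prod _ hmeas.aemeasurable]
  simp only [lintegral_const]
  rw [mul_comm]
  congr 1
  rw [Measure.volumeIoiPow,
    lintegral_withDensity_eq_lintegral_mul _
      (by exact (measurable_subtype_coe.pow_const _).ennreal_ofReal)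
      ((by exact hg.comp measurable_subtype_coe : Measurable fun y : Ioi (0:ℝ) => g y.1))]
  rw [← lintegral_subtype_comap measurableSet_Ioi
      (fun r => ENNReal.ofReal (r ^ (Module.finrank ℝ E - 1)) * g r)]
  rfl

lemma isOpen_domain11 (m : ℕ) : IsOpen (domain11 m) := by
  have hc : Continuous fun x : EuclideanSpace ℝ (Fin (m + 1)) => initPart m x :=
    (PiLp.continuous_toLp 2 _).comp (continuous_pi fun i => PiLp.continuous_apply 2 _ (i.castSucc : Fin (m + 1)))
  exact IsOpen.inter (isOpen_lt continuous_norm continuous_const)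
    (isOpen_lt (continuous_norm.comp hc) (PiLp.continuous_apply 2 _ _))

lemma memLp_of_radial_bound {m : ℕ} (k : ℕ) (hk : k ≠ 0)
    {F : Type*} [NormedAddCommGroup F]
    {f : EuclideanSpace ℝ (Fin (m + 1)) → F} {H : ℝ → ℝ}
    (hf : AEStronglyMeasurable f (volume.restrict (domain11 m)))
    (hH : Measurable H)
    (hbound : ∀ x ∈ domain11 m, ‖f x‖ ≤ H ‖x‖)
    (hfin : ∫⁻ r in Ioi (0:ℝ), ENNReal.ofReal (r ^ m) * ENNReal.ofReal (H r) ^ k < ⊤) :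
    MemLp f ((k : ℕ) : ENNReal) (volume.restrict (domain11 m)) := by
  refine ⟨hf, ?_⟩
  have hk0 : ((k : ℕ) : ENNReal) ≠ 0 := by exact_mod_cast Nat.cast_ne_zero.2 hk
  rw [eLpNorm_eq_lintegral_rpow_enorm_toReal hk0 (by simp)]
  refine ENNReal.rpow_lt_top_of_nonneg (by positivity) ?_
  have htoReal : ((k : ℕ) : ENNReal).toReal = (k : ℝ) := by simp
  rw [htoReal]
  have hb : ∫⁻ x in domain11 m, ‖f x‖ₑ ^ (k : ℝ)
      ≤ ∫⁻ x : EuclideanSpace ℝ (Fin (m + 1)), (ENNReal.ofReal (H ‖x‖)) ^ k := by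
    refine le_trans ?_ (setLIntegral_le_lintegral (domain11 m)
      (fun x => ENNReal.ofReal (H ‖x‖) ^ k))
    refine lintegral_mono_ae ?_
    rw [ae_restrict_iff' (isOpen_domain11 m).measurableSet]
    refine Filter.Eventually.of_forall fun x hx => ?_
    rw [← ENNReal.rpow_natCast (ENNReal.ofReal (H ‖x‖)) k, ← ofReal_norm]
    exact ENNReal.rpow_le_rpow (ENNReal.ofReal_le_ofReal (hbound x hx)) (by positivity)
  have hg : Measurable fun r : ℝ => ENNReal.ofReal (H r) ^ k :=
    (hH.ennreal_ofReal).pow_const _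
  have hrad := lintegral_radial (E := EuclideanSpace ℝ (Fin (m + 1))) volume hg
  rw [finrank_euclideanSpace_fin] at hrad
  simp only [Nat.add_sub_cancel] at hrad
  refine (lt_of_le_of_lt hb ?_).ne
  rw [hrad]
  exact ENNReal.mul_lt_top (measure_lt_top _ _) hfin

lemma norm_sq_split (m : ℕ) (x : EuclideanSpace ℝ (Fin (m + 1))) :
    ‖x‖ ^ 2 = ‖initPart m x‖ ^ 2 + (x (Fin.last m)) ^ 2 := by
  rw [EuclideanSpace.norm_eq, EuclideanSpace.norm_eq,
    Real.sq_sqrt (by positivity), Real.sq_sqrt (by positivity),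
    Fin.sum_univ_castSucc]
  simp [initPart, sq_abs]

lemma domain_facts {m : ℕ} {x : EuclideanSpace ℝ (Fin (m + 1))} (hx : x ∈ domain11 m) :
    0 < x (Fin.last m) ∧ x (Fin.last m) ≤ ‖x‖ ∧ ‖x‖ ≤ Real.sqrt 2 * x (Fin.last m) ∧
      0 < ‖x‖ ∧ Real.log (x (Fin.last m)) < -1 ∧ Real.log ‖x‖ < -1 := by
  obtain ⟨h1, h2⟩ := hx
  have h0 : 0 < x (Fin.last m) := lt_of_le_of_lt (norm_nonneg _) h2
  have hsplit := norm_sq_split m x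
  have hle : x (Fin.last m) ≤ ‖x‖ := by
    have : (x (Fin.last m)) ^ 2 ≤ ‖x‖ ^ 2 := by nlinarith [norm_nonneg (initPart m x)]
    nlinarith [norm_nonneg x]
  have hle2 : ‖x‖ ≤ Real.sqrt 2 * x (Fin.last m) := by
    have hsq : ‖x‖ ^ 2 ≤ (Real.sqrt 2 * x (Fin.last m)) ^ 2 := by
      have hs : (Real.sqrt 2 * x (Fin.last m)) ^ 2 = 2 * (x (Fin.last m)) ^ 2 := by
        rw [mul_pow, Real.sq_sqrt (by norm_num)]
      nlinarith [mul_nonneg (sub_nonneg.2 h2.le)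
        (by positivity : (0:ℝ) ≤ x (Fin.last m) + ‖initPart m x‖)]
    have := Real.sqrt_le_sqrt hsq
    rwa [Real.sqrt_sq (norm_nonneg x), Real.sqrt_sq (by positivity)] at this
  have hxpos : 0 < ‖x‖ := lt_of_lt_of_le h0 hle
  have hlog1 : Real.log (x (Fin.last m)) < -1 := by
    have := Real.log_lt_log h0 (lt_of_le_of_lt hle h1)
    rwa [Real.log_exp] at this
  have hlog2 : Real.log ‖x‖ < -1 := by
    have := Real.log_lt_log hxpos h1
    rwa [Real.log_exp] at this
  exact ⟨h0, hle, hle2, hxpos, hlog1, hlog2⟩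

lemma hasGradientAt_u11 (m : ℕ) {x : EuclideanSpace ℝ (Fin (m + 1))}
    (hx : x (Fin.last m) ≠ 0) :
    HasGradientAt (u11 m)
      ((-(x (Fin.last m))⁻¹) • EuclideanSpace.single (Fin.last m) (1 : ℝ)) x := by
  rw [hasGradientAt_iff_hasFDerivAt]
  have h1 : HasFDerivAt (fun y : EuclideanSpace ℝ (Fin (m + 1)) => y (Fin.last m))
      (EuclideanSpace.proj (𝕜 := ℝ) (Fin.last m)) x := by
    exact (EuclideanSpace.proj (𝕜 := ℝ) (Fin.last m)).hasFDerivAt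
  have h2 : HasDerivAt (fun t : ℝ => -Real.log t) (-(x (Fin.last m))⁻¹) (x (Fin.last m)) :=
    (Real.hasDerivAt_log hx).neg
  have hF := h2.comp_hasFDerivAt x h1
  refine hF.congr_fderiv ?_
  ext y
  simp [u11, real_inner_smul_left, EuclideanSpace.inner_single_left]

lemma integrableOn_aux : IntegrableOn (fun r : ℝ => (r * (Real.log r) ^ 2)⁻¹)
    (Ioc 0 (Real.exp (-1))) := by
  set b := Real.exp (-1) with hb
  have hb1 : b < 1 := by rw [hb]; exact Real.exp_lt_one_iff.2 (by norm_num)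
  have hb0 : 0 < b := Real.exp_pos _
  have hcont : ContinuousOn (fun r : ℝ => (-(Real.log r))⁻¹) (Icc 0 b) := by
    intro r hr
    rcases eq_or_ne r 0 with rfl | hr0
    · rw [← continuousWithinAt_diff_self]
      have h1 : Tendsto (fun r : ℝ => (-(Real.log r))⁻¹) (𝓝[≠] 0) (𝓝 0) :=
        (tendsto_neg_atBot_atTop.comp Real.tendsto_log_nhdsNE_zero).inv_tendsto_atTop
      rw [ContinuousWithinAt]
      simp only [Real.log_zero, neg_zero, inv_zero]
      exact h1.mono_left (nhdsWithin_mono _ (by intro y hy; exact hy.2))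
    · have hrpos : 0 < r := lt_of_le_of_ne hr.1 (Ne.symm hr0)
      have hlog : Real.log r ≠ 0 := by
        have : Real.log r < Real.log 1 := Real.log_lt_log hrpos (lt_of_le_of_lt hr.2 hb1)
        rw [Real.log_one] at this; exact ne_of_lt this
      exact (((Real.continuousAt_log hr0).neg).inv₀ (neg_ne_zero.2 hlog)).continuousWithinAt
  have hderiv : ∀ r ∈ Ioo 0 b, HasDerivAt (fun r : ℝ => (-(Real.log r))⁻¹)
      ((r * (Real.log r) ^ 2)⁻¹) r := by
    intro r hr
    have hr0 : r ≠ 0 := ne_of_gt hr.1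
    have hlog : Real.log r ≠ 0 := by
      have : Real.log r < Real.log 1 := Real.log_lt_log hr.1 (hr.2.trans hb1)
      rw [Real.log_one] at this; exact ne_of_lt this
    have h1 : HasDerivAt (fun r : ℝ => -Real.log r) (-r⁻¹) r := (Real.hasDerivAt_log hr0).neg
    have h2 := h1.inv (neg_ne_zero.2 hlog)
    refine h2.congr_deriv ?_
    rw [neg_neg, neg_sq, div_eq_mul_inv, mul_inv]
  have := intervalIntegral.integrableOn_deriv_of_nonneg (g := fun r : ℝ => (-(Real.log r))⁻¹)
    (g' := fun r : ℝ => (r * (Real.log r) ^ 2)⁻¹) hcont hderiv ?_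
  · exact this
  · intro r hr
    exact inv_nonneg.2 (mul_nonneg hr.1.le (sq_nonneg _))

lemma grad_add_eq_zero {m : ℕ} {x : EuclideanSpace ℝ (Fin (m + 1))} (hx : x ∈ domain11 m) :
    gradient (u11 m) x + u11 m x • b11 m x = 0 := by
  obtain ⟨h0, -, -, -, hlog1, -⟩ := domain_facts hx
  have hxl0 : x (Fin.last m) ≠ 0 := ne_of_gt h0
  have hlogne : Real.log (x (Fin.last m)) ≠ 0 := ne_of_lt (hlog1.trans (by norm_num))
  rw [(hasGradientAt_u11 m hxl0).gradient]
  unfold u11 b11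
  rw [smul_smul, ← add_smul]
  have hc : -(x (Fin.last m))⁻¹ +
      -Real.log (x (Fin.last m)) * -(x (Fin.last m) * Real.log (x (Fin.last m)))⁻¹ = 0 := by
    field_simp
    ring
  rw [hc, zero_smul]

lemma bound_inv {m : ℕ} {x : EuclideanSpace ℝ (Fin (m + 1))} (hx : x ∈ domain11 m) :
    (x (Fin.last m))⁻¹ ≤ Real.sqrt 2 / ‖x‖ := by
  obtain ⟨h0, hle, hle2, hxpos, -, -⟩ := domain_facts hx
  rw [← inv_div ‖x‖ (Real.sqrt 2)]
  refine inv_anti₀ (by positivity) ?_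
  rw [div_le_iff₀ (by positivity)]
  linarith [hle2]

lemma bound_b {m : ℕ} {x : EuclideanSpace ℝ (Fin (m + 1))} (hx : x ∈ domain11 m) :
    ‖b11 m x‖ ≤ Real.sqrt 2 / (‖x‖ * (-Real.log ‖x‖)) := by
  obtain ⟨h0, hle, hle2, hxpos, hlog1, hlog2⟩ := domain_facts hx
  have hs : 0 < -Real.log ‖x‖ := by linarith
  have hsl : 0 < -Real.log (x (Fin.last m)) := by linarith
  have hc : ‖b11 m x‖ = (x (Fin.last m) * -Real.log (x (Fin.last m)))⁻¹ := by
    rw [b11, norm_smul, EuclideanSpace.norm_single, norm_one, mul_one, Real.norm_eq_abs,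
      abs_neg, abs_inv, abs_of_neg (by nlinarith :
        x (Fin.last m) * Real.log (x (Fin.last m)) < 0)]
    congr 1
    ring
  rw [hc]
  have hprod : (‖x‖ * -Real.log ‖x‖) / Real.sqrt 2
      ≤ x (Fin.last m) * -Real.log (x (Fin.last m)) := by
    have h1 : ‖x‖ / Real.sqrt 2 ≤ x (Fin.last m) := by
      rw [div_le_iff₀ (by positivity)]
      linarith [hle2]
    have h2 : -Real.log ‖x‖ ≤ -Real.log (x (Fin.last m)) := by
      have := Real.log_le_log h0 hle
      linarith
    calc (‖x‖ * -Real.log ‖x‖) / Real.sqrt 2 = (‖x‖ / Real.sqrt 2) * (-Real.log ‖x‖) := by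
          ring
      _ ≤ x (Fin.last m) * -Real.log (x (Fin.last m)) :=
          mul_le_mul h1 h2 hs.le h0.le
  calc (x (Fin.last m) * -Real.log (x (Fin.last m)))⁻¹
      ≤ ((‖x‖ * -Real.log ‖x‖) / Real.sqrt 2)⁻¹ := by
        apply inv_anti₀ (by positivity) hprod
    _ = Real.sqrt 2 / (‖x‖ * -Real.log ‖x‖) := by rw [inv_div]

lemma hfin1 {m : ℕ} (hm : 2 ≤ m) :
    ∫⁻ r in Set.Ioi (0:ℝ), ENNReal.ofReal (r ^ m) *
      ENNReal.ofReal ((Set.Ioo (0:ℝ) (Real.exp (-1))).indicator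
        (fun r => Real.sqrt 2 / r) r) ^ 2 < ⊤ := by
  have hb1 : Real.exp (-1) < 1 := Real.exp_lt_one_iff.2 (by norm_num)
  refine lt_of_le_of_lt (lintegral_mono
    (g := (Set.Ioo (0:ℝ) (Real.exp (-1))).indicator (fun _ => (2:ℝ≥0∞))) (fun r => ?_)) ?_
  · by_cases hr : r ∈ Set.Ioo (0:ℝ) (Real.exp (-1))
    · rw [Set.indicator_of_mem hr, Set.indicator_of_mem hr]
      rw [← ENNReal.ofReal_pow (div_nonneg (Real.sqrt_nonneg 2) hr.1.le),
        ← ENNReal.ofReal_mul (pow_nonneg hr.1.le m)]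
      have h2 : ((2:ℝ≥0∞)) = ENNReal.ofReal 2 := by norm_num
      rw [h2]
      refine ENNReal.ofReal_le_ofReal ?_
      have h1 : (Real.sqrt 2 / r) ^ 2 = 2 / r ^ 2 := by
        rw [div_pow, Real.sq_sqrt (by norm_num : (0:ℝ) ≤ 2)]
      have hrm : r ^ m = r ^ (m - 2) * r ^ 2 := by rw [← pow_add]; congr 1; omega
      have hkey : r ^ m * (Real.sqrt 2 / r) ^ 2 = 2 * r ^ (m - 2) := by
        rw [h1, hrm]; field_simp [hr.1.ne']
      rw [hkey]
      have : r ^ (m - 2) ≤ 1 := pow_le_one₀ hr.1.le (le_of_lt (hr.2.trans hb1))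
      linarith
    · rw [Set.indicator_of_notMem hr, Set.indicator_of_notMem hr]; simp
  · refine lt_of_le_of_lt (setLIntegral_le_lintegral _ _) ?_
    rw [lintegral_indicator measurableSet_Ioo, setLIntegral_const]
    exact ENNReal.mul_lt_top (by norm_num) measure_Ioo_lt_top

lemma hfin2 {m : ℕ} (hm : 2 ≤ m) :
    ∫⁻ r in Set.Ioi (0:ℝ), ENNReal.ofReal (r ^ m) *
      ENNReal.ofReal ((Set.Ioo (0:ℝ) (Real.exp (-1))).indicator
        (fun r => Real.sqrt 2 / (r * (-Real.log r))) r) ^ (m + 1) < ⊤ := by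
  have hsqrt2 : Real.sqrt 2 ≤ 2 := by
    nlinarith [Real.sq_sqrt (show (0:ℝ) ≤ 2 by norm_num), Real.sqrt_nonneg 2]
  refine lt_of_le_of_lt (lintegral_mono
    (g := (Set.Ioo (0:ℝ) (Real.exp (-1))).indicator
      (fun r => ENNReal.ofReal ((2:ℝ) ^ (m + 1) * (r * Real.log r ^ 2)⁻¹))) (fun r => ?_)) ?_
  · by_cases hr : r ∈ Set.Ioo (0:ℝ) (Real.exp (-1))
    · rw [Set.indicator_of_mem hr, Set.indicator_of_mem hr]
      have hr0 : 0 < r := hr.1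
      have hs1 : 1 ≤ -Real.log r := by
        have := Real.log_lt_log hr0 hr.2
        rw [Real.log_exp] at this
        linarith
      have hs0 : 0 < -Real.log r := lt_of_lt_of_le one_pos hs1
      rw [← ENNReal.ofReal_pow (div_nonneg (Real.sqrt_nonneg 2) (by positivity)),
        ← ENNReal.ofReal_mul (pow_nonneg hr0.le m)]
      refine ENNReal.ofReal_le_ofReal ?_
      have key : r ^ m * (Real.sqrt 2 / (r * (-Real.log r))) ^ (m + 1)
          = Real.sqrt 2 ^ (m + 1) / (r * (-Real.log r) ^ (m + 1)) := by
        rw [div_pow, mul_pow, pow_succ r m]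
        field_simp
      have hsq : Real.log r ^ 2 = (-Real.log r) ^ 2 := (neg_sq _).symm
      rw [key, hsq, ← div_eq_mul_inv]
      refine div_le_div₀ (by positivity) (pow_le_pow_left₀ (Real.sqrt_nonneg 2) hsqrt2 _)
        (by positivity) ?_
      exact mul_le_mul_of_nonneg_left (pow_le_pow_right₀ hs1 (by omega)) hr0.le
    · rw [Set.indicator_of_notMem hr, Set.indicator_of_notMem hr]; simp
  · refine lt_of_le_of_lt (setLIntegral_le_lintegral _ _) ?_
    rw [lintegral_indicator measurableSet_Ioo]
    have hInt : IntegrableOn (fun r : ℝ => (2:ℝ) ^ (m + 1) * (r * Real.log r ^ 2)⁻¹)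
        (Set.Ioo 0 (Real.exp (-1))) :=
      (integrableOn_aux.mono_set Set.Ioo_subset_Ioc_self).const_mul _
    exact hInt.lintegral_lt_top

end Aux

theorem stmt11 (m : ℕ) (hm : 2 ≤ m) :
    -- ∇u + b u = 0 in Ω
    (∀ x ∈ domain11 m, gradient (u11 m) x + u11 m x • b11 m x = 0) ∧
    -- u ∈ W^{1,2}(Ω)
    MemLp (u11 m) 2 (volume.restrict (domain11 m)) ∧
    MemLp (gradient (u11 m)) 2 (volume.restrict (domain11 m)) ∧
    -- b ∈ Lⁿ(Ω; ℝⁿ), n = m + 1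
    MemLp (b11 m) ((m + 1 : ℕ) : ENNReal) (volume.restrict (domain11 m)) ∧
    -- weak solution with vanishing conormal data
    (∀ φ : EuclideanSpace ℝ (Fin (m + 1)) → ℝ, ContDiff ℝ (⊤ : ℕ∞) φ →
      HasCompactSupport φ →
      ∫ x in domain11 m,
        (inner ℝ (gradient (u11 m) x + u11 m x • b11 m x) (gradient φ x) : ℝ) = 0) ∧
    -- u is unbounded near 0 ∈ ∂Ω
    (∀ ε : ℝ, 0 < ε → ∀ C : ℝ, ∃ x ∈ domain11 m, ‖x‖ < ε ∧ C < u11 m x) := by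

  have hcoord : Measurable fun x : EuclideanSpace ℝ (Fin (m + 1)) => x (Fin.last m) :=
    (PiLp.continuous_apply 2 _ (Fin.last m)).measurable
  -- Part 2: u ∈ L²
  have part2 : MemLp (u11 m) 2 (volume.restrict (domain11 m)) := by
    have h := memLp_of_radial_bound (m := m) 2 (by norm_num)
      (f := u11 m) (H := (Set.Ioo (0:ℝ) (Real.exp (-1))).indicator fun r => Real.sqrt 2 / r)
      (((Real.measurable_log.comp hcoord).neg).aestronglyMeasurable)
      ((measurable_const.div measurable_id).indicator measurableSet_Ioo)
      (fun x hx => ?_) (hfin1 hm)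
    · simpa using h
    · obtain ⟨h0, hle, hle2, hxpos, hlog1, hlog2⟩ := domain_facts hx
      rw [Set.indicator_of_mem (Set.mem_Ioo.2 ⟨hxpos, hx.1⟩)]
      have h1 : ‖u11 m x‖ = -Real.log (x (Fin.last m)) := by
        rw [u11, Real.norm_eq_abs, abs_of_pos (by linarith)]
      have h2 : -Real.log (x (Fin.last m)) ≤ (x (Fin.last m))⁻¹ := by
        have h3 := Real.log_le_sub_one_of_pos (inv_pos.2 h0)
        rw [Real.log_inv] at h3
        have h4 : (0:ℝ) < (x (Fin.last m))⁻¹ := inv_pos.2 h0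
        linarith
      rw [h1]
      exact h2.trans (bound_inv hx)
  -- Part 3: gradient u ∈ L²
  have hgrad_formula : ∀ x ∈ domain11 m, gradient (u11 m) x
      = (-(x (Fin.last m))⁻¹) • EuclideanSpace.single (Fin.last m) (1 : ℝ) := by
    intro x hx
    exact (hasGradientAt_u11 m (ne_of_gt (domain_facts hx).1)).gradient
  have hgmeas : Measurable fun x : EuclideanSpace ℝ (Fin (m + 1)) =>
      (-(x (Fin.last m))⁻¹) • EuclideanSpace.single (Fin.last m) (1 : ℝ) :=
    (hcoord.inv.neg).smul_const _
  have haesm_grad : AEStronglyMeasurable (gradient (u11 m)) (volume.restrict (domain11 m)) := by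
    refine hgmeas.aestronglyMeasurable.congr ?_
    rw [Filter.EventuallyEq, ae_restrict_iff' (isOpen_domain11 m).measurableSet]
    exact Filter.Eventually.of_forall fun x hx => (hgrad_formula x hx).symm
  have part3 : MemLp (gradient (u11 m)) 2 (volume.restrict (domain11 m)) := by
    have h := memLp_of_radial_bound (m := m) 2 (by norm_num)
      (f := gradient (u11 m))
      (H := (Set.Ioo (0:ℝ) (Real.exp (-1))).indicator fun r => Real.sqrt 2 / r)
      haesm_grad
      ((measurable_const.div measurable_id).indicator measurableSet_Ioo)
      (fun x hx => ?_) (hfin1 hm)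
    · simpa using h
    · obtain ⟨h0, hle, hle2, hxpos, hlog1, hlog2⟩ := domain_facts hx
      rw [Set.indicator_of_mem (Set.mem_Ioo.2 ⟨hxpos, hx.1⟩)]
      rw [hgrad_formula x hx, norm_smul, Real.norm_eq_abs, abs_neg, abs_inv, abs_of_pos h0,
        EuclideanSpace.norm_single, norm_one, mul_one]
      exact bound_inv hx
  -- Part 4: b ∈ L^{m+1}
  have part4 : MemLp (b11 m) ((m + 1 : ℕ) : ENNReal) (volume.restrict (domain11 m)) := by
    have hbmeas : Measurable (b11 m) := by
      unfold b11
      exact ((hcoord.mul (Real.measurable_log.comp hcoord)).inv.neg).smul_const _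
    have h := memLp_of_radial_bound (m := m) (m + 1) (by omega)
      (f := b11 m)
      (H := (Set.Ioo (0:ℝ) (Real.exp (-1))).indicator fun r => Real.sqrt 2 / (r * (-Real.log r)))
      hbmeas.aestronglyMeasurable
      ((measurable_const.div
        (measurable_id.mul Real.measurable_log.neg)).indicator measurableSet_Ioo)
      (fun x hx => ?_) (hfin2 hm)
    · exact h
    · obtain ⟨h0, hle, hle2, hxpos, hlog1, hlog2⟩ := domain_facts hx
      rw [Set.indicator_of_mem (Set.mem_Ioo.2 ⟨hxpos, hx.1⟩)]
      exact bound_b hx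
  refine ⟨fun x hx => grad_add_eq_zero hx, part2, part3, part4, ?_, ?_⟩
  -- Part 5: weak solution
  · intro φ hφ hcs
    refine setIntegral_eq_zero_of_forall_eq_zero fun x hx => ?_
    rw [grad_add_eq_zero hx]
    exact inner_zero_left _
  -- Part 6: unbounded near 0
  · intro ε hε C
    have hM : 0 < min (min ε (Real.exp (-1))) (Real.exp (-(|C| + 1))) :=
      lt_min (lt_min hε (Real.exp_pos _)) (Real.exp_pos _)
    set t := min (min ε (Real.exp (-1))) (Real.exp (-(|C| + 1))) / 2 with htdef
    have ht0 : 0 < t := by positivity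
    have htnorm : ‖EuclideanSpace.single (Fin.last m) t‖ = t := by
      rw [EuclideanSpace.norm_single, Real.norm_eq_abs, abs_of_pos ht0]
    have htlast : EuclideanSpace.single (Fin.last m) t (Fin.last m) = t := by
      simp [EuclideanSpace.single_apply]
    refine ⟨EuclideanSpace.single (Fin.last m) t, ⟨?_, ?_⟩, ?_, ?_⟩
    · rw [htnorm]
      calc t < min (min ε (Real.exp (-1))) (Real.exp (-(|C| + 1))) := by
            rw [htdef]; linarith
        _ ≤ Real.exp (-1) := le_trans (min_le_left _ _) (min_le_right _ _)
    · have hip : initPart m (EuclideanSpace.single (Fin.last m) t) = 0 := by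
        ext i
        simp [initPart, EuclideanSpace.single_apply, (Fin.castSucc_lt_last i).ne]
      rw [hip, norm_zero, htlast]
      exact ht0
    · rw [htnorm]
      calc t < min (min ε (Real.exp (-1))) (Real.exp (-(|C| + 1))) := by
            rw [htdef]; linarith
        _ ≤ ε := le_trans (min_le_left _ _) (min_le_left _ _)
    · rw [u11, htlast]
      have hlt : t < Real.exp (-(|C| + 1)) := by
        calc t < min (min ε (Real.exp (-1))) (Real.exp (-(|C| + 1))) := by
              rw [htdef]; linarith
          _ ≤ Real.exp (-(|C| + 1)) := min_le_right _ _
      have := Real.log_lt_log ht0 hlt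
      rw [Real.log_exp] at this
      have habs := le_abs_self C
      linarith
end
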